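/- arXiv:1505.05622 — 3 statements merged into one kernel-verified Lean document; each statement's English description precedes it below -/
import Mathlib

section
/- Let n ≥ 2 and let G be a finite nilpotent group of nilpotency class n. Then Aut_c^{n-1}(G) is isomorphic as a group to Hom_c(G/Z(G), γ_n(G)). -/
/-- `Aut^M(G)`: automorphisms `f` of `G` with `g⁻¹ * f g ∈ M` for all `g`. -/
def autM {G : Type*} [Group G] (M : Subgroup G) : Subgroup (MulAut G) where
  carrier := {f | ∀ g : G, g⁻¹ * f g ∈ M}
  one_mem' := by intro g; simpa using M.one_mem
  mul_mem' := by
    intro f₁ f₂ h₁ h₂ g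
    have key : g⁻¹ * (f₁ * f₂) g = (g⁻¹ * f₂ g) * ((f₂ g)⁻¹ * f₁ (f₂ g)) := by
      rw [MulAut.mul_apply]; group
    rw [key]; exact M.mul_mem (h₂ g) (h₁ (f₂ g))
  inv_mem' := by
    intro f hf g
    have h := M.inv_mem (hf (f⁻¹ g))
    simpa [MulAut.apply_inv_self, mul_inv_rev] using h

/-- `Aut_N(G)`: automorphisms of `G` fixing `N` elementwise. -/
def autN {G : Type*} [Group G] (N : Subgroup G) : Subgroup (MulAut G) where
  carrier := {f | ∀ n ∈ N, f n = n}
  one_mem' := fun n _ => rfl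
  mul_mem' := by
    intro f₁ f₂ h₁ h₂ n hn
    rw [MulAut.mul_apply, h₂ n hn, h₁ n hn]
  inv_mem' := by
    intro f hf n hn
    exact f.injective (by rw [MulAut.apply_inv_self]; exact (hf n hn).symm)

/-- `Aut_c^m(G)`: `m`-th class preserving automorphisms, conjugation by
elements of `γ_m(G) = (⊤ : Subgroup G).lowerCentralSeries (m-1)`. -/
def autC (G : Type*) [Group G] (m : ℕ) : Subgroup (MulAut G) where
  carrier := {f | ∀ g : G, ∃ x ∈ (⊤ : Subgroup G).lowerCentralSeries (m - 1), f g = x⁻¹ * g * x}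
  one_mem' := fun g => ⟨1, Subgroup.one_mem _, by simp⟩
  mul_mem' := by
    intro f₁ f₂ h₁ h₂ g
    obtain ⟨x, hx, hx2⟩ := h₂ g
    obtain ⟨y, hy, hy2⟩ := h₁ (x⁻¹ * g * x)
    exact ⟨x * y, Subgroup.mul_mem _ hx hy, by rw [MulAut.mul_apply, hx2, hy2]; group⟩
  inv_mem' := by
    intro f hf g
    obtain ⟨x, hx, hx2⟩ := hf (f⁻¹ g)
    refine ⟨x⁻¹, Subgroup.inv_mem _ hx, ?_⟩
    rw [MulAut.apply_inv_self] at hx2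
    rw [inv_inv]
    conv_rhs => rw [hx2]
    group

/-- A group is purely non-abelian if it has no non-trivial abelian direct factor. -/
def PurelyNonabelian (H : Type u) [Group H] : Prop :=
  ¬ ∃ (K B : Type u) (_ : Group K) (_ : CommGroup B),
      Nontrivial B ∧ Nonempty (H ≃* K × B)

/-! Since `γ_n(G)` is central, an automorphism `β` with `g⁻¹ β(g) ∈ γ_n(G)` for all `g` that fixes
`Z(G)` pointwise is the same thing as the homomorphism `g Z(G) ↦ g⁻¹ β(g)` from `G/Z(G)` to
`γ_n(G)`; the inverse sends `φ` to `g ↦ g φ(g Z(G))`, which is injective, hence bijective as `G`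
is finite. Composition becomes pointwise multiplication because `β₁` fixes the central element
`g⁻¹ β₂(g)`. Conjugation by `x ∈ γ_{n-1}(G)` moves `g` by the commutator `[g, x] ∈ γ_n(G)` and
fixes `Z(G)`, so `Aut_c^{n-1}(G)` corresponds exactly to the homomorphisms with values of the
form `[g, x]`. -/

open Subgroup
open scoped commutatorElement

section ClassPreservingAutomorphisms

variable {G : Type*} [Group G]

lemma lowerCentralSeries_pred_le_center {n : ℕ}
    (hnil : (⊤ : Subgroup G).lowerCentralSeries n = ⊥) :
    (⊤ : Subgroup G).lowerCentralSeries (n - 1) ≤ center G := by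
  cases n with
  | zero => simp_all
  | succ n =>
    rw [Subgroup.lowerCentralSeries_succ, commutator_eq_bot_iff_le_centralizer, coe_top,
      centralizer_univ] at hnil
    exact hnil

lemma autC_le_autM (m : ℕ) : autC G m ≤ autM ((⊤ : Subgroup G).lowerCentralSeries m) := by
  intro f hf g
  obtain ⟨x, hx, hfg⟩ := hf g
  have hcomm : ⁅x⁻¹, g⁻¹⁆ ∈ (⊤ : Subgroup G).lowerCentralSeries (m - 1 + 1) :=
    commutator_mem_commutator (inv_mem hx) (mem_top _)
  refine Subgroup.lowerCentralSeries_antitone ⊤ (by omega : m ≤ m - 1 + 1) ?_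
  rw [hfg, show g⁻¹ * (x⁻¹ * g * x) = ⁅x⁻¹, g⁻¹⁆⁻¹ by group]
  exact inv_mem hcomm

lemma autC_le_autN_center (m : ℕ) : autC G m ≤ autN (center G) := by
  intro f hf z hz
  obtain ⟨x, -, hfz⟩ := hf z
  rw [hfz, mul_assoc, ← mem_center_iff.mp hz x, inv_mul_cancel_left]

variable {M : Subgroup G}

def autM.toHom (hM : M ≤ center G) (f : autM M) : G →* M where
  toFun g := ⟨g⁻¹ * f.1 g, f.2 g⟩
  map_one' := by ext; simp
  map_mul' a b := by
    ext
    have hcomm := mem_center_iff.mp (hM (f.2 a)) b⁻¹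
    calc (a * b)⁻¹ * f.1 (a * b) = b⁻¹ * (a⁻¹ * f.1 a) * f.1 b := by rw [map_mul]; group
      _ = a⁻¹ * f.1 a * (b⁻¹ * f.1 b) := by rw [hcomm]; group

def centralHomOfAut (hM : M ≤ center G) (f : ↥(autM M ⊓ autN (center G))) :
    G ⧸ center G →* M :=
  QuotientGroup.lift _ (autM.toHom hM ⟨f, f.2.1⟩) fun z hz => by
    ext
    simp [autM.toHom, f.2.2 z hz]

@[simp]
lemma centralHomOfAut_apply (hM : M ≤ center G) (f : ↥(autM M ⊓ autN (center G))) (g : G) :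
    (centralHomOfAut hM f g : G) = g⁻¹ * f.1 g :=
  rfl

def endOfCentralHom (hM : M ≤ center G) (φ : G ⧸ center G →* M) : G →* G where
  toFun g := g * φ g
  map_one' := by simp
  map_mul' a b := by
    rw [QuotientGroup.mk_mul, map_mul, coe_mul, mul_assoc a, ← mul_assoc b,
      mem_center_iff.mp (hM (φ a).2) b]
    group

lemma endOfCentralHom_injective (hM : M ≤ center G) (φ : G ⧸ center G →* M) :
    Function.Injective (endOfCentralHom hM φ) := by
  refine (injective_iff_map_eq_one _).mpr fun g hg => ?_
  have hg_eq : g = (φ g : G)⁻¹ := eq_inv_of_mul_eq_one_left hg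
  have hg_center : (g : G ⧸ center G) = 1 :=
    (QuotientGroup.eq_one_iff g).mpr (hg_eq ▸ inv_mem (hM (φ g).2))
  rw [hg_eq, hg_center, map_one, coe_one, inv_one]

noncomputable def autOfCentralHom [Finite G] (hM : M ≤ center G) (φ : G ⧸ center G →* M) :
    MulAut G :=
  MulEquiv.ofBijective (endOfCentralHom hM φ)
    (Finite.injective_iff_bijective.mp (endOfCentralHom_injective hM φ))

lemma autOfCentralHom_apply [Finite G] (hM : M ≤ center G) (φ : G ⧸ center G →* M) (g : G) :
    autOfCentralHom hM φ g = g * φ g :=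
  rfl

lemma autOfCentralHom_mem [Finite G] (hM : M ≤ center G) (φ : G ⧸ center G →* M) :
    autOfCentralHom hM φ ∈ autM M ⊓ autN (center G) := by
  refine ⟨fun g => ?_, fun z hz => ?_⟩
  · simp [autOfCentralHom_apply]
  · rw [autOfCentralHom_apply, (QuotientGroup.eq_one_iff z).mpr hz, map_one, coe_one, mul_one]

noncomputable def centralHomEquiv [Finite G] (hM : M ≤ center G) :
    ↥(autM M ⊓ autN (center G)) ≃ (G ⧸ center G →* M) where
  toFun := centralHomOfAut hM
  invFun φ := ⟨autOfCentralHom hM φ, autOfCentralHom_mem hM φ⟩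
  left_inv f := by
    ext g
    simp [autOfCentralHom_apply]
  right_inv φ := by
    ext g
    simp [autOfCentralHom_apply]

lemma centralHomOfAut_mul (hM : M ≤ center G) (f₁ f₂ : ↥(autM M ⊓ autN (center G)))
    (x : G ⧸ center G) :
    centralHomOfAut hM (f₁ * f₂) x = centralHomOfAut hM f₁ x * centralHomOfAut hM f₂ x := by
  induction x using QuotientGroup.induction_on with
  | H g =>
    ext
    have hfix : f₁.1 (g⁻¹ * f₂.1 g) = g⁻¹ * f₂.1 g := f₁.2.2 _ (hM (f₂.2.1 g))
    calc g⁻¹ * f₁.1 (f₂.1 g) = g⁻¹ * f₁.1 (g * (g⁻¹ * f₂.1 g)) := by group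
      _ = g⁻¹ * f₁.1 g * (g⁻¹ * f₂.1 g) := by rw [map_mul, hfix, mul_assoc]

end ClassPreservingAutomorphisms

theorem statement7_general {G : Type*} [Group G] [Finite G] (n : ℕ)
    (hnil : (⊤ : Subgroup G).lowerCentralSeries n = ⊥) :
    ∃ φ : (autC G (n - 1)) ≃
        {f : (G ⧸ Subgroup.center G) →* ((⊤ : Subgroup G).lowerCentralSeries (n - 1)) //
          ∀ g : G, ∃ x ∈ (⊤ : Subgroup G).lowerCentralSeries (n - 2),
            (f (g : G ⧸ Subgroup.center G) : G) = g⁻¹ * x⁻¹ * g * x},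
      ∀ (f₁ f₂ : autC G (n - 1)) (x : G ⧸ Subgroup.center G),
        ((φ (f₁ * f₂)).1 x : G) = ((φ f₁).1 x : G) * ((φ f₂).1 x : G) := by
  have hM := lowerCentralSeries_pred_le_center hnil
  have hC : autC G (n - 1) ≤ autM _ ⊓ autN (center G) :=
    le_inf (autC_le_autM _) (autC_le_autN_center _)
  refine ⟨(Equiv.subtypeSubtypeEquivSubtype fun hf => hC hf).symm.trans
    ((centralHomEquiv hM).subtypeEquiv fun f => ?_), fun f₁ f₂ x => ?_⟩
  · refine forall_congr' fun g => exists_congr fun x => and_congr_right fun _ => ?_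
    change _ ↔ g⁻¹ * f.1 g = _
    simp only [mul_assoc, mul_right_inj]
  · exact congrArg Subtype.val (centralHomOfAut_mul hM ⟨f₁, hC f₁.2⟩ ⟨f₂, hC f₂.2⟩ x)

/-- for `n ≥ 2` and a finite nilpotent group `G` of nilpotency class
exactly `n`, `Aut_c^{n-1}(G)` is isomorphic as a group to
`Hom_c(G/Z(G), γ_n(G))` (with pointwise multiplication). -/
theorem statement7 {G : Type*} [Group G] [Finite G] (n : ℕ) (hn : 2 ≤ n)
    (hnil : (⊤ : Subgroup G).lowerCentralSeries n = ⊥)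
    (hclass : (⊤ : Subgroup G).lowerCentralSeries (n - 1) ≠ ⊥) :
    ∃ φ : (autC G (n - 1)) ≃
        {f : (G ⧸ Subgroup.center G) →* ((⊤ : Subgroup G).lowerCentralSeries (n - 1)) //
          ∀ g : G, ∃ x ∈ (⊤ : Subgroup G).lowerCentralSeries (n - 2),
            (f (g : G ⧸ Subgroup.center G) : G) = g⁻¹ * x⁻¹ * g * x},
      ∀ (f₁ f₂ : autC G (n - 1)) (x : G ⧸ Subgroup.center G),
        ((φ (f₁ * f₂)).1 x : G) = ((φ f₁).1 x : G) * ((φ f₂).1 x : G) :=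
  statement7_general n hnil
end

section
/- Let p be a prime, let n ≥ 2, and let G be a finite non-abelian p-group such that Aut_{Z(G)}^{γ_n(G)}(G) = Autcent(G). Then G is purely non-abelian and γ_n(G) ⊆ Z(G). -/
/-- `Aut_N^M(G) = Aut^M(G) ∩ Aut_N(G)`. -/
def autMN {G : Type*} [Group G] (M N : Subgroup G) : Subgroup (MulAut G) :=
  autM M ⊓ autN N

/-!
Conjugation by `x ∈ γ_{n-1}(G)` moves every element within `γ_n(G)` and fixes `Z(G)`, so it lies
in `Aut_{Z(G)}^{γ_n(G)}(G) = Autcent(G)`; hence `[x, g] ∈ Z(G)` for all `g`, i.e.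
`γ_n(G) = [γ_{n-1}(G), G] ≤ Z(G)`.

If `G ≅ K × B` with `B ≠ 1` abelian, then `K` is a non-trivial `p`-group, so `Z(K)` contains an
element of order `p`, and `B` has a quotient of order `p`. This gives a non-trivial homomorphism
`σ : B → Z(K)`, and `(k, b) ↦ (k σ(b), b)` is a central automorphism moving the central
element `(1, b)` whenever `σ b ≠ 1`, contradicting `Autcent(G) ≤ Aut_{Z(G)}(G)`.
-/

open Subgroup
open scoped commutatorElement

section Conjugation

variable {G : Type*} [Group G]

lemma conj_mem_autM_iff {M : Subgroup G} {x : G} :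
    MulAut.conj x ∈ autM M ↔ ∀ g, ⁅x, g⁆ ∈ M := by
  have key (g : G) : g⁻¹ * MulAut.conj x g = ⁅x, g⁻¹⁆⁻¹ := by
    simp only [MulAut.conj_apply, commutatorElement_def]; group
  refine ⟨fun h g => ?_, fun h g => ?_⟩
  · have hg := M.inv_mem (h g⁻¹)
    rwa [key, inv_inv, inv_inv] at hg
  · rw [key]; exact M.inv_mem (h g⁻¹)

lemma conj_mem_autN_center (x : G) : MulAut.conj x ∈ autN (center G) := fun z hz => by
  rw [MulAut.conj_apply, mem_center_iff.mp hz x, mul_inv_cancel_right]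

lemma commutator_top_le_iff {H M : Subgroup G} :
    ⁅H, ⊤⁆ ≤ M ↔ ∀ x ∈ H, MulAut.conj x ∈ autM M := by
  simp only [commutator_le, mem_top, true_implies, conj_mem_autM_iff]

lemma lowerCentralSeries_succ_le_center_of_autMN_eq {k : ℕ}
    (h : autMN ((⊤ : Subgroup G).lowerCentralSeries (k + 1)) (center G) = autM (center G)) :
    (⊤ : Subgroup G).lowerCentralSeries (k + 1) ≤ center G := by
  refine commutator_top_le_iff.mpr fun x hx => h ▸ mem_inf.mpr ⟨?_, conj_mem_autN_center x⟩
  exact commutator_top_le_iff.mp le_rfl x hx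

end Conjugation

section CentralAutomorphisms

lemma autM_center_le_autN_center_of_mulEquiv {G H : Type*} [Group G] [Group H] (e : G ≃* H)
    (h : autM (center G) ≤ autN (center G)) : autM (center H) ≤ autN (center H) := by
  intro f hf z hz
  have hf' : (e.trans f).trans e.symm ∈ autM (center G) := fun g => by
    have hcen := MulEquivClass.apply_mem_center e.symm (hf (e g))
    rwa [map_mul, map_inv, e.symm_apply_apply] at hcen
  have hfix := h hf' (e.symm z) (MulEquivClass.apply_mem_center e.symm hz)
  simpa using hfix

variable {K B : Type*} [Group K]

def prodShear [Group B] (σ : B →* center K) : MulAut (K × B) where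
  toFun x := (x.1 * σ x.2, x.2)
  invFun x := (x.1 * (σ x.2)⁻¹, x.2)
  left_inv x := by simp
  right_inv x := by simp
  map_mul' x y := by
    ext
    · simp only [Prod.fst_mul, Prod.snd_mul, map_mul, Subgroup.coe_mul]
      rw [mul_assoc x.1, ← mul_assoc y.1, mem_center_iff.mp (σ x.2).2 y.1]
      group
    · rfl

lemma prodShear_apply [Group B] (σ : B →* center K) (x : K × B) :
    prodShear σ x = (x.1 * σ x.2, x.2) := rfl

lemma prodShear_mem_autM_center [Group B] (σ : B →* center K) :
    prodShear σ ∈ autM (center (K × B)) := by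
  intro x
  rw [Subgroup.center_prod, mem_prod, prodShear_apply]
  simp

lemma prodShear_not_mem_autN_center [CommGroup B] {σ : B →* center K} (hσ : σ ≠ 1) :
    prodShear σ ∉ autN (center (K × B)) := by
  obtain ⟨b, hb⟩ := DFunLike.ne_iff.mp hσ
  intro hfix
  have hcen : ((1 : K), b) ∈ center (K × B) := by
    rw [Subgroup.center_prod, CommGroup.center_eq_top]
    exact ⟨one_mem _, mem_top b⟩
  have hb' := hfix _ hcen
  rw [prodShear_apply] at hb'
  exact hb (Subtype.ext (by simpa using hb'))

end CentralAutomorphisms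

namespace IsPGroup

variable {p : ℕ} [Fact p.Prime]

lemma exists_index_eq_prime {G : Type*} [Group G] [Finite G] [Nontrivial G]
    (hG : IsPGroup p G) : ∃ M : Subgroup G, M.index = p := by
  obtain ⟨k, hk0, hk⟩ := hG.nontrivial_iff_card.mp ‹_›
  obtain ⟨M, hM⟩ := Sylow.exists_subgroup_card_pow_prime p (n := k - 1) (G := G)
    (hk ▸ pow_dvd_pow p (Nat.sub_le k 1))
  refine ⟨M, Nat.eq_of_mul_eq_mul_left (pow_pos (Fact.out : p.Prime).pos (k - 1)) ?_⟩
  rw [← hM, M.card_mul_index, hk, hM, ← pow_succ, Nat.sub_add_cancel hk0]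

lemma exists_mem_center_orderOf_eq {G : Type*} [Group G] [Finite G] [Nontrivial G]
    (hG : IsPGroup p G) : ∃ z : center G, orderOf z = p := by
  have := hG.center_nontrivial
  obtain ⟨k, hk0, hk⟩ := (hG.to_subgroup (center G)).nontrivial_iff_card.mp ‹_›
  exact exists_prime_orderOf_dvd_card' p (hk ▸ dvd_pow_self p hk0.ne')

lemma exists_monoidHom_center_ne_one {K B : Type*} [Group K] [CommGroup B]
    [Finite K] [Finite B] [Nontrivial K] [Nontrivial B] (hB : IsPGroup p B) (hK : IsPGroup p K) :
    ∃ σ : B →* center K, σ ≠ 1 := by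
  obtain ⟨M, hM⟩ := hB.exists_index_eq_prime
  obtain ⟨z, hz⟩ := hK.exists_mem_center_orderOf_eq
  have hzp : Nat.card (zpowers z) = p := by rw [Nat.card_zpowers, hz]
  let e : B ⧸ M ≃* zpowers z := mulEquivOfPrimeCardEq (M.index_eq_card ▸ hM) hzp
  refine ⟨(zpowers z).subtype.comp (e.toMonoidHom.comp (QuotientGroup.mk' M)), fun hσ => ?_⟩
  obtain ⟨b, hb⟩ := QuotientGroup.mk'_surjective M (e.symm ⟨z, mem_zpowers z⟩)
  have hσb : (zpowers z).subtype (e (QuotientGroup.mk' M b)) = z := by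
    rw [hb, MulEquiv.apply_symm_apply]; rfl
  have hz1 : z = 1 := hσb ▸ DFunLike.congr_fun hσ b
  exact (Fact.out : p.Prime).one_lt.ne' (hz ▸ orderOf_eq_one_iff.mpr hz1)

end IsPGroup

theorem purelyNonabelian_of_autM_center_le_autN_center {p : ℕ} (hp : p.Prime)
    {G : Type u} [Group G] [Finite G] (hpG : IsPGroup p G) (hna : ¬ ∀ a b : G, a * b = b * a)
    (h : autM (center G) ≤ autN (center G)) : PurelyNonabelian G := by
  have := Fact.mk hp
  rintro ⟨K, B, _, _, _, ⟨e⟩⟩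
  have : Finite (K × B) := Finite.of_equiv G e.toEquiv
  have : Finite K := Finite.prod_left B
  have : Finite B := Finite.prod_right K
  have : Nontrivial K := by
    refine not_subsingleton_iff_nontrivial.mp fun hK => hna fun a b => e.injective ?_
    rw [map_mul, map_mul]
    exact Prod.ext (Subsingleton.elim _ _) (mul_comm _ _)
  have hpKB : IsPGroup p (K × B) := hpG.of_equiv e
  obtain ⟨σ, hσ⟩ := (hpKB.of_surjective (MonoidHom.snd K B) Prod.snd_surjective)
    |>.exists_monoidHom_center_ne_one (hpKB.of_surjective (MonoidHom.fst K B) Prod.fst_surjective)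
  exact prodShear_not_mem_autN_center hσ
    (autM_center_le_autN_center_of_mulEquiv e h (prodShear_mem_autM_center σ))

/-- if `G` is a finite non-abelian `p`-group, `n ≥ 2`, and
`Aut_{Z(G)}^{γ_n(G)}(G) = Autcent(G)`, then `G` is purely non-abelian and
`γ_n(G) ⊆ Z(G)`. -/
theorem statement13 {p : ℕ} (hp : p.Prime) (n : ℕ) (hn : 2 ≤ n)
    {G : Type u} [Group G] [Finite G]
    (hpG : IsPGroup p G) (hna : ¬ ∀ a b : G, a * b = b * a)
    (h : autMN ((⊤ : Subgroup G).lowerCentralSeries (n - 1)) (Subgroup.center G) =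
      autM (Subgroup.center G)) :
    PurelyNonabelian G ∧ (⊤ : Subgroup G).lowerCentralSeries (n - 1) ≤ Subgroup.center G := by
  refine ⟨purelyNonabelian_of_autM_center_le_autN_center hp hpG hna (h ▸ inf_le_right), ?_⟩
  obtain ⟨k, rfl⟩ : ∃ k, n = k + 2 := ⟨n - 2, by omega⟩
  exact lowerCentralSeries_succ_le_center_of_autMN_eq h
end

section
/- Let p be a prime, let n ≥ 2, and let G be a finite non-abelian p-group. If γ_n(G) = Z(G), then Aut_{Z(G)}^{γ_n(G)}(G) = Autcent(G). -/
/-! Central automorphisms fix every commutator, since `⁅a z, b w⁆ = ⁅a, b⁆` for central `z, w`.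
Hence they fix `γ₂(G) ⊇ γ_n(G) = Z(G)` pointwise, which is the nontrivial inclusion. -/

open scoped commutatorElement

theorem commutatorElement_mul_mem_center {G : Type*} [Group G] (x y : G) {z w : G}
    (hz : z ∈ Subgroup.center G) (hw : w ∈ Subgroup.center G) :
    ⁅x * z, y * w⁆ = ⁅x, y⁆ := by
  rw [Subgroup.mem_center_iff] at hz hw
  calc ⁅x * z, y * w⁆ = x * (z * (y * w) * z⁻¹) * x⁻¹ * (y * w)⁻¹ := by group
    _ = x * y * (w * x⁻¹ * w⁻¹) * y⁻¹ := by rw [← hz, mul_inv_cancel_right]; group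
    _ = ⁅x, y⁆ := by rw [← hw, mul_inv_cancel_right, commutatorElement_def]

theorem autN_antitone {G : Type*} [Group G] {N N' : Subgroup G} (hN : N ≤ N') :
    autN N' ≤ autN N :=
  fun _ hf n hn => hf n (hN hn)

theorem autM_center_le_autN_commutator (G : Type*) [Group G] :
    autM (Subgroup.center G) ≤ autN (commutator G) := by
  intro f hf
  suffices commutator G ≤ MonoidHom.eqLocus (f : G ≃* G).toMonoidHom (MonoidHom.id G) from
    fun g hg => this hg
  rw [commutator_def, Subgroup.commutator_le]
  intro a _ b _
  change f ⁅a, b⁆ = ⁅a, b⁆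
  rw [map_commutatorElement, ← mul_inv_cancel_left a (f a), ← mul_inv_cancel_left b (f b),
    commutatorElement_mul_mem_center a b (hf a) (hf b)]

theorem statement15_general (n : ℕ) (hn : 2 ≤ n)
    {G : Type u} [Group G]
    (h : (⊤ : Subgroup G).lowerCentralSeries (n - 1) = Subgroup.center G) :
    autMN ((⊤ : Subgroup G).lowerCentralSeries (n - 1)) (Subgroup.center G) =
      autM (Subgroup.center G) := by
  have center_le_commutator : Subgroup.center G ≤ commutator G := by
    rw [← h, ← Subgroup.top_lowerCentralSeries_one]
    exact Subgroup.lowerCentralSeries_antitone _ (by omega)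
  rw [autMN, h, inf_eq_left]
  exact (autM_center_le_autN_commutator G).trans (autN_antitone center_le_commutator)

/-- if `G` is a finite non-abelian `p`-group, `n ≥ 2`, and
`γ_n(G) = Z(G)`, then `Aut_{Z(G)}^{γ_n(G)}(G) = Autcent(G)`. -/
theorem statement15 {p : ℕ} (hp : p.Prime) (n : ℕ) (hn : 2 ≤ n)
    {G : Type u} [Group G] [Finite G]
    (hpG : IsPGroup p G) (hna : ¬ ∀ a b : G, a * b = b * a)
    (h : (⊤ : Subgroup G).lowerCentralSeries (n - 1) = Subgroup.center G) :
    autMN ((⊤ : Subgroup G).lowerCentralSeries (n - 1)) (Subgroup.center G) =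
      autM (Subgroup.center G) :=
  statement15_general n hn h
end
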